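/- arXiv:2311.14261 — 5 statements merged into one kernel-verified Lean document; each statement's English description precedes it below -/
import Mathlib

section
/- Let f : L → M be a Scott-continuous map between well-filtered dcpos. Then the map Q(f) : Q(L) → Q(M) defined by Q(f)(K) = ↑f(K) (the upper closure of the image of K) is Scott-continuous, where Q(L) and Q(M) carry the reverse inclusion order. -/
universe u

/-- A subset is Scott open: an upper set inaccessible by directed suprema. -/
def ScottOpen {α : Type u} [Preorder α] (U : Set α) : Prop :=
  IsUpperSet U ∧ ∀ d : Set α, d.Nonempty → DirectedOn (· ≤ ·) d →
    ∀ a : α, IsLUB d a → a ∈ U → (d ∩ U).Nonempty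

/-- A subset is Scott closed: a lower set closed under directed suprema. -/
def ScottClosed {α : Type u} [Preorder α] (C : Set α) : Prop :=
  IsLowerSet C ∧ ∀ d : Set α, d ⊆ C → d.Nonempty → DirectedOn (· ≤ ·) d →
    ∀ a : α, IsLUB d a → a ∈ C

/-- A dcpo: every nonempty directed subset has a supremum. -/
def IsDcpo (α : Type u) [Preorder α] : Prop :=
  ∀ d : Set α, d.Nonempty → DirectedOn (· ≤ ·) d → ∃ a, IsLUB d a

/-- Compactness with respect to the Scott topology. -/
def ScottCompact {α : Type u} [Preorder α] (K : Set α) : Prop :=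
  ∀ 𝒰 : Set (Set α), (∀ U ∈ 𝒰, ScottOpen U) → K ⊆ ⋃₀ 𝒰 →
    ∃ F : Set (Set α), F ⊆ 𝒰 ∧ F.Finite ∧ K ⊆ ⋃₀ F

/-- Well-filteredness of the Scott topology of a poset. -/
def WellFiltered (α : Type u) [Preorder α] : Prop :=
  ∀ 𝒞 : Set (Set α), 𝒞.Nonempty →
    (∀ K ∈ 𝒞, ScottCompact K ∧ IsUpperSet K) →
    DirectedOn (fun A B : Set α => B ⊆ A) 𝒞 →
    ∀ U : Set α, ScottOpen U → ⋂₀ 𝒞 ⊆ U → ∃ K ∈ 𝒞, K ⊆ U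

/-- The Hoare power construction: Scott closed subsets ordered by inclusion. -/
structure HPoset (α : Type u) [Preorder α] where
  carrier : Set α
  closed' : ScottClosed carrier

instance {α : Type u} [Preorder α] : PartialOrder (HPoset α) where
  le A B := A.carrier ⊆ B.carrier
  le_refl _ := subset_rfl
  le_trans _ _ _ h h' := Set.Subset.trans h h'
  le_antisymm A B h h' := by
    cases A; cases B
    simp only [HPoset.mk.injEq]
    exact subset_antisymm h h'

/-- The Smyth power construction: nonempty Scott compact saturated subsets
ordered by reverse inclusion. -/
structure QPoset (α : Type u) [Preorder α] where
  carrier : Set α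
  nonempty' : carrier.Nonempty
  compact' : ScottCompact carrier
  upper' : IsUpperSet carrier

instance {α : Type u} [Preorder α] : PartialOrder (QPoset α) where
  le K K' := K'.carrier ⊆ K.carrier
  le_refl _ := subset_rfl
  le_trans _ _ _ h h' := Set.Subset.trans h' h
  le_antisymm K K' h h' := by
    cases K; cases K'
    simp only [QPoset.mk.injEq]
    exact subset_antisymm h' h

/-- The lattice of Scott open subsets ordered by inclusion. -/
structure OpenSet (α : Type u) [Preorder α] where
  carrier : Set α
  open' : ScottOpen carrier

instance {α : Type u} [Preorder α] : PartialOrder (OpenSet α) where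
  le A B := A.carrier ⊆ B.carrier
  le_refl _ := subset_rfl
  le_trans _ _ _ h h' := Set.Subset.trans h h'
  le_antisymm A B h h' := by
    cases A; cases B
    simp only [OpenSet.mk.injEq]
    exact subset_antisymm h h'

/-! Q(f) is monotone, and by well-filteredness the supremum of a directed family 𝒦 in Q(L) is
⋂ 𝒦. So it suffices that ⋂_{K ∈ 𝒦} ↑f(K) ⊆ ↑f(⋂ 𝒦). If y is not above any point of f(⋂ 𝒦),
then ⋂ 𝒦 lies in the Scott open set f⁻¹(M ∖ ↓y); by well-filteredness some K ∈ 𝒦 already does,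
so y ∉ ↑f(K). -/

open Set

section UpperImage

variable {α β : Type u} [Preorder β]

def upperImage (f : α → β) (K : Set α) : Set β :=
  {y | ∃ x ∈ K, f x ≤ y}

lemma isUpperSet_upperImage (f : α → β) (K : Set α) : IsUpperSet (upperImage f K) :=
  fun _ _ hyz ⟨x, hx, hxy⟩ => ⟨x, hx, hxy.trans hyz⟩

lemma Set.Nonempty.upperImage {K : Set α} (hK : K.Nonempty) (f : α → β) :
    (upperImage f K).Nonempty :=
  let ⟨x, hx⟩ := hK
  ⟨f x, x, hx, le_rfl⟩

lemma upperImage_mono (f : α → β) {K K' : Set α} (h : K ⊆ K') : upperImage f K ⊆ upperImage f K' :=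
  fun _ ⟨x, hx, hxy⟩ => ⟨x, h hx, hxy⟩

end UpperImage

section Scott

variable {α β : Type u} [Preorder α] [Preorder β]

lemma scottOpen_empty : ScottOpen (∅ : Set α) :=
  ⟨isUpperSet_empty, fun _ _ _ _ _ h => absurd h (notMem_empty _)⟩

lemma scottOpen_sUnion {𝒰 : Set (Set α)} (h𝒰 : ∀ U ∈ 𝒰, ScottOpen U) : ScottOpen (⋃₀ 𝒰) := by
  refine ⟨isUpperSet_sUnion fun U hU => (h𝒰 U hU).1, ?_⟩
  rintro d hd hdir a ha ⟨U, hU, haU⟩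
  obtain ⟨x, hxd, hxU⟩ := (h𝒰 U hU).2 d hd hdir a ha haU
  exact ⟨x, hxd, U, hU, hxU⟩

lemma scottOpen_compl_Iic (y : α) : ScottOpen (Iic y)ᶜ := by
  refine ⟨fun a b hab ha hb => ha (hab.trans hb), fun d _ _ a ha hay => ?_⟩
  by_contra hd
  exact hay (ha.2 fun x hx => not_not.1 fun hxy => hd ⟨x, hx, hxy⟩)

lemma ScottOpen.preimage {f : α → β} (hf : ScottContinuous f) {U : Set β} (hU : ScottOpen U) :
    ScottOpen (f ⁻¹' U) := by
  refine ⟨hU.1.preimage hf.monotone, fun d hd hdir a ha hfa => ?_⟩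
  obtain ⟨_, ⟨x, hx, rfl⟩, hfx⟩ :=
    hU.2 _ (hd.image f) (hdir.mono_comp hf.monotone) _ (hf hd hdir ha) hfa
  exact ⟨x, hx, hfx⟩

lemma ScottCompact.upperImage {f : α → β} (hf : ScottContinuous f) {K : Set α}
    (hK : ScottCompact K) : ScottCompact (upperImage f K) := by
  intro 𝒰 h𝒰 hcov
  have hK𝒰 : K ⊆ ⋃₀ (preimage f '' 𝒰) := fun x hx => by
    obtain ⟨U, hU, hfx⟩ := hcov ⟨x, hx, le_rfl⟩
    exact ⟨f ⁻¹' U, mem_image_of_mem _ hU, hfx⟩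
  obtain ⟨F, hF𝒰, hFfin, hKF⟩ :=
    hK _ (forall_mem_image.2 fun U hU => (h𝒰 U hU).preimage hf) hK𝒰
  obtain ⟨G, hG𝒰, hGfin, hKG⟩ :=
    exists_subset_image_finite_and (p := fun G => K ⊆ ⋃₀ G) |>.1 ⟨F, hF𝒰, hFfin, hKF⟩
  refine ⟨G, hG𝒰, hGfin, ?_⟩
  rintro y ⟨x, hx, hxy⟩
  obtain ⟨_, ⟨U, hU, rfl⟩, hfx⟩ := hKG hx
  exact ⟨U, hU, (h𝒰 U (hG𝒰 hU)).1 hxy hfx⟩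

end Scott

namespace QPoset

variable {α β : Type u} [Preorder α] [Preorder β]

lemma directedOn_image_carrier {d : Set (QPoset α)} (hdir : DirectedOn (· ≤ ·) d) :
    DirectedOn (fun A B : Set α => B ⊆ A) (carrier '' d) := by
  rintro _ ⟨K, hK, rfl⟩ _ ⟨K', hK', rfl⟩
  obtain ⟨c, hc, hKc, hK'c⟩ := hdir K hK K' hK'
  exact ⟨c.carrier, mem_image_of_mem _ hc, hKc, hK'c⟩

lemma exists_carrier_subset (hw : WellFiltered α) {d : Set (QPoset α)} (hd : d.Nonempty)
    (hdir : DirectedOn (· ≤ ·) d) {U : Set α} (hU : ScottOpen U)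
    (hdU : ⋂₀ (carrier '' d) ⊆ U) : ∃ K ∈ d, K.carrier ⊆ U := by
  obtain ⟨_, ⟨K, hK, rfl⟩, hKU⟩ := hw _ (hd.image carrier)
    (forall_mem_image.2 fun K _ => ⟨K.compact', K.upper'⟩) (directedOn_image_carrier hdir) U hU hdU
  exact ⟨K, hK, hKU⟩

lemma sInter_nonempty (hw : WellFiltered α) {d : Set (QPoset α)} (hd : d.Nonempty)
    (hdir : DirectedOn (· ≤ ·) d) : (⋂₀ (carrier '' d)).Nonempty := by
  by_contra h
  obtain ⟨K, -, hK⟩ :=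
    exists_carrier_subset hw hd hdir scottOpen_empty (not_nonempty_iff_eq_empty.1 h).subset
  exact K.nonempty'.ne_empty (subset_empty_iff.1 hK)

lemma scottCompact_sInter (hw : WellFiltered α) {d : Set (QPoset α)} (hd : d.Nonempty)
    (hdir : DirectedOn (· ≤ ·) d) : ScottCompact (⋂₀ (carrier '' d)) := by
  intro 𝒰 h𝒰 hcov
  obtain ⟨K, hK, hK𝒰⟩ := exists_carrier_subset hw hd hdir (scottOpen_sUnion h𝒰) hcov
  obtain ⟨F, hF𝒰, hFfin, hKF⟩ := K.compact' 𝒰 h𝒰 hK𝒰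
  exact ⟨F, hF𝒰, hFfin, (sInter_subset_of_mem (mem_image_of_mem _ hK)).trans hKF⟩

def sInter (hw : WellFiltered α) {d : Set (QPoset α)} (hd : d.Nonempty)
    (hdir : DirectedOn (· ≤ ·) d) : QPoset α :=
  ⟨⋂₀ (carrier '' d), sInter_nonempty hw hd hdir, scottCompact_sInter hw hd hdir,
    isUpperSet_sInter (forall_mem_image.2 fun K _ => K.upper')⟩

lemma isLUB_sInter (hw : WellFiltered α) {d : Set (QPoset α)} (hd : d.Nonempty)
    (hdir : DirectedOn (· ≤ ·) d) : IsLUB d (sInter hw hd hdir) :=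
  ⟨fun _ hK => sInter_subset_of_mem (mem_image_of_mem _ hK),
    fun _ hb => subset_sInter (forall_mem_image.2 fun _ hK => hb hK)⟩

def map (f : α → β) (hf : ScottContinuous f) (K : QPoset α) : QPoset β :=
  ⟨upperImage f K.carrier, K.nonempty'.upperImage f, K.compact'.upperImage hf,
    isUpperSet_upperImage f K.carrier⟩

lemma map_mono {f : α → β} (hf : ScottContinuous f) : Monotone (map f hf) :=
  fun _ _ h => upperImage_mono f h

lemma iInter_upperImage_subset (hw : WellFiltered α) {f : α → β} (hf : ScottContinuous f)
    {d : Set (QPoset α)} (hd : d.Nonempty) (hdir : DirectedOn (· ≤ ·) d) :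
    ⋂ K ∈ d, upperImage f K.carrier ⊆ upperImage f (⋂₀ (carrier '' d)) := by
  intro y hy
  by_contra hy'
  obtain ⟨K, hK, hKy⟩ := exists_carrier_subset hw hd hdir ((scottOpen_compl_Iic y).preimage hf)
    fun x hx hfx => hy' ⟨x, hx, hfx⟩
  obtain ⟨x, hx, hfx⟩ := mem_iInter₂.1 hy K hK
  exact hKy hx hfx

lemma scottContinuous_map (hw : WellFiltered α) {f : α → β} (hf : ScottContinuous f) :
    ScottContinuous (map f hf) := by
  intro d hd hdir a ha
  obtain rfl := ha.unique (isLUB_sInter hw hd hdir)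
  refine ⟨(map_mono hf).mem_upperBounds_image ha.1, fun b hb => ?_⟩
  have hb' : b.carrier ⊆ ⋂ K ∈ d, upperImage f K.carrier :=
    subset_iInter₂ fun K hK => hb (mem_image_of_mem _ hK)
  exact hb'.trans (iInter_upperImage_subset hw hf hd hdir)

end QPoset

theorem smyth_functor_scottContinuous_general {L M : Type u} [PartialOrder L] [PartialOrder M]
    (hwL : WellFiltered L)
    (f : L → M) (hf : ScottContinuous f) :
    ∃ Qf : QPoset L → QPoset M,
      (∀ K : QPoset L, (Qf K).carrier = {y : M | ∃ x ∈ K.carrier, f x ≤ y}) ∧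
      ScottContinuous Qf :=
  ⟨QPoset.map f hf, fun _ => rfl, QPoset.scottContinuous_map hwL hf⟩

theorem smyth_functor_scottContinuous {L M : Type u} [PartialOrder L] [PartialOrder M]
    (hdL : IsDcpo L) (hwL : WellFiltered L) (hdM : IsDcpo M) (hwM : WellFiltered M)
    (f : L → M) (hf : ScottContinuous f) :
    ∃ Qf : QPoset L → QPoset M,
      (∀ K : QPoset L, (Qf K).carrier = {y : M | ∃ x ∈ K.carrier, f x ≤ y}) ∧
      ScottContinuous Qf :=
  smyth_functor_scottContinuous_general hwL f hf
end

section
/- Let L be a well-filtered dcpo, M a complete lattice, and f : L → M a Scott-continuous map. Then there is a unique map f̂ : H(L) → M preserving arbitrary suprema such that f̂(↓x) = f(x) for all x ∈ L; explicitly, f̂(A) = sup f(A) for each Scott closed set A. -/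
universe u

/-! Every Scott closed set `A` is the join in `H(L)` of the principal ideals `↓a`, `a ∈ A`, so a
join-preserving `f̂` with `f̂(↓x) = f(x)` must send `A` to `sup f(A)`. Conversely `A ↦ sup f(A)`
preserves joins because `f⁻¹(↓m)` is Scott closed for Scott continuous `f`: it is an upper bound
in `H(L)` of any family whose images lie below `m`. -/

section Hoare

variable {α : Type u} {β : Type*} [Preorder α]

theorem scottClosed_Iic (x : α) : ScottClosed (Set.Iic x) :=
  ⟨fun _ _ hba ha => hba.trans ha, fun _ hd _ _ _ ha => ha.2 fun _ hy => hd hy⟩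

theorem ScottContinuous.scottClosed_preimage_Iic [Preorder β] {f : α → β}
    (hf : ScottContinuous f) (m : β) : ScottClosed (f ⁻¹' Set.Iic m) := by
  refine ⟨fun _ _ hba ha => (hf.monotone hba).trans ha, fun d hd hne hdir a ha => ?_⟩
  exact (hf hne hdir ha).2 (Set.forall_mem_image.2 hd)

namespace HPoset

def principal (x : α) : HPoset α := ⟨Set.Iic x, scottClosed_Iic x⟩

theorem isLUB_image_principal (A : HPoset α) : IsLUB (principal '' A.carrier) A := by
  refine ⟨?_, fun B hB x hx => hB ⟨x, hx, rfl⟩ le_rfl⟩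
  rintro _ ⟨a, ha, rfl⟩ y hy
  exact A.closed'.1 hy ha

variable [CompleteLattice β]

def lift (f : α → β) (A : HPoset α) : β := sSup (f '' A.carrier)

theorem lift_le_iff {f : α → β} {A : HPoset α} {m : β} :
    lift f A ≤ m ↔ A.carrier ⊆ f ⁻¹' Set.Iic m := by
  rw [lift, sSup_le_iff, Set.forall_mem_image]
  rfl

theorem lift_mono (f : α → β) : Monotone (lift f) :=
  fun _ _ hAB => sSup_le_sSup (Set.image_mono hAB)

theorem lift_of_carrier_eq_Iic {f : α → β} (hf : Monotone f) {x : α} {A : HPoset α}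
    (hA : A.carrier = Set.Iic x) : lift f A = f x := by
  rw [lift, hA]
  exact (hf.map_isGreatest isGreatest_Iic).isLUB.sSup_eq

theorem lift_eq_sSup_of_isLUB {f : α → β} (hf : ScottContinuous f) {S : Set (HPoset α)}
    {a : HPoset α} (ha : IsLUB S a) : lift f a = sSup (lift f '' S) := by
  refine le_antisymm ?_ (sSup_le (Set.forall_mem_image.2 fun s hs => lift_mono f (ha.1 hs)))
  let B : HPoset α := ⟨_, hf.scottClosed_preimage_Iic (sSup (lift f '' S))⟩
  have hB : B ∈ upperBounds S := fun s hs => lift_le_iff.1 (le_sSup ⟨s, hs, rfl⟩)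
  exact lift_le_iff.2 (ha.2 hB)

theorem eq_lift_of_isLUB_of_carrier_eq_Iic {f : α → β} {g : HPoset α → β}
    (hg : ∀ (S : Set (HPoset α)) (a : HPoset α), IsLUB S a → g a = sSup (g '' S))
    (hgf : ∀ (x : α) (A : HPoset α), A.carrier = Set.Iic x → g A = f x) :
    g = lift f := by
  funext A
  rw [hg _ A A.isLUB_image_principal, Set.image_image, lift]
  exact congrArg sSup (Set.image_congr fun x _ => hgf x _ rfl)

end HPoset

end Hoare

theorem hoare_universal_property_general {L : Type u} {M : Type u} [PartialOrder L]
    [CompleteLattice M]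
    (f : L → M) (hf : ScottContinuous f) :
    (∃! fhat : HPoset L → M,
      (∀ (S : Set (HPoset L)) (a : HPoset L), IsLUB S a → fhat a = sSup (fhat '' S)) ∧
      (∀ (x : L) (A : HPoset L), A.carrier = Set.Iic x → fhat A = f x)) ∧
    (∀ fhat : HPoset L → M,
      ((∀ (S : Set (HPoset L)) (a : HPoset L), IsLUB S a → fhat a = sSup (fhat '' S)) ∧
       (∀ (x : L) (A : HPoset L), A.carrier = Set.Iic x → fhat A = f x)) →
      ∀ A : HPoset L, fhat A = sSup (f '' A.carrier)) := by
  refine ⟨⟨HPoset.lift f, ⟨fun _ _ => HPoset.lift_eq_sSup_of_isLUB hf,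
    fun _ _ => HPoset.lift_of_carrier_eq_Iic hf.monotone⟩,
    fun g hg => HPoset.eq_lift_of_isLUB_of_carrier_eq_Iic hg.1 hg.2⟩, fun g hg A => ?_⟩
  rw [HPoset.eq_lift_of_isLUB_of_carrier_eq_Iic hg.1 hg.2, HPoset.lift]

theorem hoare_universal_property {L : Type u} {M : Type u} [PartialOrder L]
    [CompleteLattice M] (hd : IsDcpo L) (hw : WellFiltered L)
    (f : L → M) (hf : ScottContinuous f) :
    (∃! fhat : HPoset L → M,
      (∀ (S : Set (HPoset L)) (a : HPoset L), IsLUB S a → fhat a = sSup (fhat '' S)) ∧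
      (∀ (x : L) (A : HPoset L), A.carrier = Set.Iic x → fhat A = f x)) ∧
    (∀ fhat : HPoset L → M,
      ((∀ (S : Set (HPoset L)) (a : HPoset L), IsLUB S a → fhat a = sSup (fhat '' S)) ∧
       (∀ (x : L) (A : HPoset L), A.carrier = Set.Iic x → fhat A = f x)) →
      ∀ A : HPoset L, fhat A = sSup (f '' A.carrier)) :=
  hoare_universal_property_general f hf
end

section
/- Every consonant poset has property (KC): for every Scott compact saturated subset 𝒦 of Γ(P) (with the Scott topology on Γ(P)) and every Scott open U ⊆ P that meets every member of 𝒦, there exists a Scott compact saturated subset K ⊆ U that still meets every member of 𝒦. -/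
universe u

/-- A consonant poset. -/
def ConsonantPoset (P : Type u) [Preorder P] : Prop :=
  ∀ 𝒰 : Set (OpenSet P), ScottOpen 𝒰 → ∀ U ∈ 𝒰,
    ∃ K : Set P, ScottCompact K ∧ IsUpperSet K ∧
      K ⊆ U.carrier ∧ {V : OpenSet P | K ⊆ V.carrier} ⊆ 𝒰

/-!
Let `𝒰` be the family of Scott open `V ⊆ P` that meet every member of `𝒦`. It is an upper set
containing `U`, and it is Scott open in `σ(P)`: a directed union `⋃ d` meeting all of `𝒦` yields the
cover of `𝒦` by the Scott open sets `◇W = {A | W ∩ A ≠ ∅}`, `W ∈ d`; compactness of `𝒦` leaves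
finitely many `W`, and one member of `d` above them already lies in `𝒰`. Consonance then gives a
compact saturated `K ⊆ U` with `Φ(K) ⊆ 𝒰`. If `K` missed some `A ∈ 𝒦`, then `Aᶜ ∈ Φ(K) ⊆ 𝒰`,
which is absurd since `Aᶜ` does not meet `A`.
-/

section Preorder

variable {α : Type u} [Preorder α]

lemma ScottClosed.scottOpen_compl {C : Set α} (hC : ScottClosed C) : ScottOpen Cᶜ := by
  refine ⟨hC.1.compl, fun d hd hdir a ha haC => ?_⟩
  by_contra hdC
  exact haC (hC.2 d (fun x hx => by_contra fun hxC => hdC ⟨x, hx, hxC⟩) hd hdir a ha)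

lemma ScottOpen.scottClosed_compl {V : Set α} (hV : ScottOpen V) : ScottClosed Vᶜ :=
  ⟨hV.1.compl, fun d hdV hd hdir a ha haV => by
    obtain ⟨x, hx, hxV⟩ := hV.2 d hd hdir a ha haV
    exact hdV hx hxV⟩

lemma DirectedOn.exists_mem_forall_le_of_finite {d : Set α} (hd : d.Nonempty)
    (hdir : DirectedOn (· ≤ ·) d) {s : Set α} (hs : s.Finite) (hsd : s ⊆ d) :
    ∃ b ∈ d, ∀ x ∈ s, x ≤ b := by
  induction s, hs using Set.Finite.induction_on with
  | empty => exact hd.imp fun b hb => ⟨hb, by simp⟩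
  | @insert a t _ _ ih =>
    rw [Set.insert_subset_iff] at hsd
    obtain ⟨b, hb, htb⟩ := ih hsd.2
    obtain ⟨c, hc, hac, hbc⟩ := hdir a hsd.1 b hb
    refine ⟨c, hc, ?_⟩
    rintro x (rfl | hx)
    exacts [hac, (htb x hx).trans hbc]

lemma ScottCompact.exists_finite_subcover {K : Set α} (hK : ScottCompact K) {ι : Type*}
    {c : Set ι} {f : ι → Set α} (hf : ∀ i ∈ c, ScottOpen (f i)) (hcover : K ⊆ ⋃ i ∈ c, f i) :
    ∃ t ⊆ c, t.Finite ∧ K ⊆ ⋃ i ∈ t, f i := by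
  obtain ⟨F, hFc, hF, hKF⟩ := hK (f '' c) (by rintro _ ⟨i, hi, rfl⟩; exact hf i hi)
    (by rwa [Set.sUnion_image])
  obtain ⟨t, htc, ht, hKt⟩ :=
    Set.exists_subset_image_finite_and (p := fun F => K ⊆ ⋃₀ F) |>.mp ⟨F, hFc, hF, hKF⟩
  exact ⟨t, htc, ht, by rwa [Set.sUnion_image] at hKt⟩

def HPoset.meets (V : Set α) : Set (HPoset α) := {A | (V ∩ A.carrier).Nonempty}

/-- The closed set `Vᶜ` bounds every member of `d` that misses `V`, so it cannot bound all of them. -/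
lemma HPoset.exists_mem_meets_of_isLUB {V : Set α} (hV : ScottOpen V) {d : Set (HPoset α)}
    {A : HPoset α} (hA : IsLUB d A) (hVA : A ∈ HPoset.meets V) : ∃ B ∈ d, B ∈ HPoset.meets V := by
  by_contra hd
  have hbound : (⟨Vᶜ, hV.scottClosed_compl⟩ : HPoset α) ∈ upperBounds d :=
    fun B hB x hxB hxV => hd ⟨B, hB, x, hxV, hxB⟩
  obtain ⟨x, hxV, hxA⟩ := hVA
  exact hA.2 hbound hxA hxV

/-- The open set `Cᶜ` bounds every member of `d` that misses `C`, so it cannot bound all of them. -/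
lemma OpenSet.exists_mem_inter_nonempty_of_isLUB {C : Set α} (hC : ScottClosed C)
    {d : Set (OpenSet α)} {V : OpenSet α} (hV : IsLUB d V) (hVC : (V.carrier ∩ C).Nonempty) :
    ∃ W ∈ d, (W.carrier ∩ C).Nonempty := by
  by_contra hd
  have hbound : (⟨Cᶜ, hC.scottOpen_compl⟩ : OpenSet α) ∈ upperBounds d :=
    fun W hW x hxW hxC => hd ⟨W, hW, x, hxW, hxC⟩
  obtain ⟨x, hxV, hxC⟩ := hVC
  exact hV.2 hbound hxV hxC

lemma ScottOpen.hPoset_meets {V : Set α} (hV : ScottOpen V) : ScottOpen (HPoset.meets V) :=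
  ⟨fun _ _ hAB ⟨x, hxV, hxA⟩ => ⟨x, hxV, hAB hxA⟩,
    fun _ _ _ _ hA hVA => HPoset.exists_mem_meets_of_isLUB hV hA hVA⟩

lemma ScottCompact.scottOpen_setOf_forall_inter_nonempty {𝒦 : Set (HPoset α)}
    (h𝒦 : ScottCompact 𝒦) :
    ScottOpen {V : OpenSet α | ∀ A ∈ 𝒦, (V.carrier ∩ A.carrier).Nonempty} := by
  refine ⟨fun V W hVW hV A hA => (hV A hA).mono (Set.inter_subset_inter_left _ hVW), ?_⟩
  intro d hd hdir V hVd hV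
  have hcover : 𝒦 ⊆ ⋃ W ∈ d, HPoset.meets W.carrier := fun A hA => by
    obtain ⟨W, hW, hWA⟩ := OpenSet.exists_mem_inter_nonempty_of_isLUB A.closed' hVd (hV A hA)
    exact Set.mem_biUnion hW hWA
  obtain ⟨t, htd, ht, h𝒦t⟩ :=
    h𝒦.exists_finite_subcover (fun W _ => W.open'.hPoset_meets) hcover
  obtain ⟨W', hW'd, htW'⟩ := hdir.exists_mem_forall_le_of_finite hd ht htd
  refine ⟨W', hW'd, fun A hA => ?_⟩
  obtain ⟨W, hWt, hWA⟩ := Set.mem_iUnion₂.mp (h𝒦t hA)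
  exact hWA.mono (Set.inter_subset_inter_left _ (htW' W hWt))

end Preorder

theorem consonant_implies_KC_general {P : Type u} [PartialOrder P] (hcons : ConsonantPoset P)
    (𝒦 : Set (HPoset P)) (hc : ScottCompact 𝒦)
    (U : Set P) (hU : ScottOpen U) (hmeet : ∀ A ∈ 𝒦, (U ∩ A.carrier).Nonempty) :
    ∃ K : Set P, ScottCompact K ∧ IsUpperSet K ∧ K ⊆ U ∧
      ∀ A ∈ 𝒦, (K ∩ A.carrier).Nonempty := by
  obtain ⟨K, hKc, hKu, hKU, hΦ⟩ :=
    hcons _ hc.scottOpen_setOf_forall_inter_nonempty ⟨U, hU⟩ hmeet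
  refine ⟨K, hKc, hKu, hKU, fun A hA => ?_⟩
  by_contra hKA
  let Acompl : OpenSet P := ⟨A.carrierᶜ, A.closed'.scottOpen_compl⟩
  have hK_compl : K ⊆ Acompl.carrier := fun x hxK hxA => hKA ⟨x, hxK, hxA⟩
  obtain ⟨x, hx_compl, hxA⟩ := hΦ hK_compl A hA
  exact hx_compl hxA

theorem consonant_implies_KC {P : Type u} [PartialOrder P] (hcons : ConsonantPoset P)
    (𝒦 : Set (HPoset P)) (hc : ScottCompact 𝒦) (hu : IsUpperSet 𝒦)
    (U : Set P) (hU : ScottOpen U) (hmeet : ∀ A ∈ 𝒦, (U ∩ A.carrier).Nonempty) :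
    ∃ K : Set P, ScottCompact K ∧ IsUpperSet K ∧ K ⊆ U ∧
      ∀ A ∈ 𝒦, (K ∩ A.carrier).Nonempty :=
  consonant_implies_KC_general hcons 𝒦 hc U hU hmeet
end

section
/- Let L be a well-filtered dcpo such that φ : H(Q(L)) → Q(H(L)) and ψ : Q(H(L)) → H(Q(L)) are mutually inverse isomorphisms. Then L has property (KC): for every Scott compact saturated subset 𝒦 of Γ(L) and every Scott open U meeting all members of 𝒦, there exists a compact saturated K ⊆ U meeting all members of 𝒦. -/
universe u

/-- The map φ : H(Q(L)) → Q(H(L)) on underlying subsets. -/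
def phiMap {L : Type u} [Preorder L] (𝒜 : Set (QPoset L)) : Set (HPoset L) :=
  {A : HPoset L | ∀ K ∈ 𝒜, (A.carrier ∩ K.carrier).Nonempty}

/-- The map ψ : Q(H(L)) → H(Q(L)) on underlying subsets. -/
def psiMap {L : Type u} [Preorder L] (𝒦 : Set (HPoset L)) : Set (QPoset L) :=
  {K : QPoset L | ∀ A ∈ 𝒦, (K.carrier ∩ A.carrier).Nonempty}

/-! Since `φ ∘ ψ` is the identity on `Q(H(L))`, the given `𝒦` equals `φ(ψ 𝒦)`. The Scott closed set
`L ∖ U` misses `U`, so it is not in `𝒦`; hence some `K ∈ ψ 𝒦` misses `L ∖ U`, i.e. `K ⊆ U`, and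
membership in `ψ 𝒦` says exactly that `K` meets every member of `𝒦`. -/

theorem scottCompact_empty {α : Type u} [Preorder α] : ScottCompact (∅ : Set α) :=
  fun _ _ _ => ⟨∅, Set.empty_subset _, Set.finite_empty, Set.empty_subset _⟩

theorem ScottOpen.scottClosed_compl_s14 {α : Type u} [Preorder α] {U : Set α} (hU : ScottOpen U) :
    ScottClosed Uᶜ := by
  refine ⟨hU.1.compl, fun d hdU hne hdir a ha haU => ?_⟩
  obtain ⟨x, hxd, hxU⟩ := hU.2 d hne hdir a ha haU
  exact hdU hxd hxU

theorem exists_subset_of_compl_notMem_phiMap {L : Type u} [Preorder L] {𝒜 : Set (QPoset L)}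
    {U : Set L} (hU : ScottClosed Uᶜ) (h : (⟨Uᶜ, hU⟩ : HPoset L) ∉ phiMap 𝒜) :
    ∃ K ∈ 𝒜, K.carrier ⊆ U := by
  by_contra! hK
  refine h fun K hK𝒜 => ?_
  obtain ⟨x, hxK, hxU⟩ := Set.not_subset.1 (hK K hK𝒜)
  exact ⟨x, hxU, hxK⟩

theorem iso_implies_KC_general {L : Type u} [PartialOrder L]
    (h2 : ∀ 𝒦 : Set (HPoset L), 𝒦.Nonempty → ScottCompact 𝒦 → IsUpperSet 𝒦 →
      phiMap (psiMap 𝒦) = 𝒦) :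
    ∀ 𝒦 : Set (HPoset L), ScottCompact 𝒦 → IsUpperSet 𝒦 →
      ∀ U : Set L, ScottOpen U → (∀ A ∈ 𝒦, (U ∩ A.carrier).Nonempty) →
      ∃ K : Set L, ScottCompact K ∧ IsUpperSet K ∧ K ⊆ U ∧
        ∀ A ∈ 𝒦, (K ∩ A.carrier).Nonempty := by
  intro 𝒦 h𝒦c h𝒦u U hU hmeet
  rcases 𝒦.eq_empty_or_nonempty with rfl | hne
  · exact ⟨∅, scottCompact_empty, isUpperSet_empty, Set.empty_subset _, by simp⟩
  have hcompl : (⟨Uᶜ, hU.scottClosed_compl_s14⟩ : HPoset L) ∉ 𝒦 := fun h => by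
    obtain ⟨x, hxU, hx⟩ := hmeet _ h
    exact hx hxU
  rw [← h2 𝒦 hne h𝒦c h𝒦u] at hcompl
  obtain ⟨K, hK, hKU⟩ := exists_subset_of_compl_notMem_phiMap _ hcompl
  exact ⟨K.carrier, K.compact', K.upper', hKU, hK⟩

theorem iso_implies_KC {L : Type u} [PartialOrder L]
    (hd : IsDcpo L) (hw : WellFiltered L)
    (h1 : ∀ 𝒜 : Set (QPoset L), ScottClosed 𝒜 → psiMap (phiMap 𝒜) = 𝒜)
    (h2 : ∀ 𝒦 : Set (HPoset L), 𝒦.Nonempty → ScottCompact 𝒦 → IsUpperSet 𝒦 →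
      phiMap (psiMap 𝒦) = 𝒦) :
    ∀ 𝒦 : Set (HPoset L), ScottCompact 𝒦 → IsUpperSet 𝒦 →
      ∀ U : Set L, ScottOpen U → (∀ A ∈ 𝒦, (U ∩ A.carrier).Nonempty) →
      ∃ K : Set L, ScottCompact K ∧ IsUpperSet K ∧ K ⊆ U ∧
        ∀ A ∈ 𝒦, (K ∩ A.carrier).Nonempty :=
  iso_implies_KC_general h2
end

section
/- Every up-complete ∨-semilattice (a dcpo in which every nonempty finite subset has a supremum) endowed with the Scott topology is well-filtered. -/
universe u

/-!
If no member of `𝒞` lies in `U`, Zorn's lemma and compactness give a closed set `C ⊆ Uᶜ` that is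
minimal among closed sets meeting every member of `𝒞` (Rudin's lemma). Such a `C` is closed under
binary joins. Indeed, for `x ∈ C` and `K ∈ 𝒞` the set of `z` with `z ⊔ p ∉ C` for all
`p ∈ C ∩ K` is Scott open, as `C ∩ K` is compact. If it met `C`, minimality would put some
`C ∩ K₀` inside it, and a point `z ∈ C ∩ K₁` with `K₁ ⊆ K₀ ∩ K` would give `z = z ⊔ z ∉ C`.
So `x` is not in it, hence `{p ∈ C | x ⊔ p ∈ C}` meets every member of `𝒞` and equals `C`.
Thus `C` is directed, and its supremum lies in `C` and above a point of each `K ∈ 𝒞`, so in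
`⋂₀ 𝒞 ⊆ U`: a contradiction.
-/

open Set Topology TopologicalSpace

section ScottTopology

variable {P : Type*} [Preorder P] [TopologicalSpace P] [IsScott P univ]

lemma scottOpen_iff_isOpen {U : Set P} : ScottOpen U ↔ IsOpen U := by
  rw [IsScott.isOpen_iff_isUpperSet_and_dirSupInaccOn (D := univ), dirSupInaccOn_univ]
  rfl

lemma ScottCompact.isCompact {K : Set P} (hK : ScottCompact K) : IsCompact K :=
  isCompact_generateFrom (generateFrom_setOfPred_isOpen _).symm fun 𝒰 h𝒰 hcov =>
    hK 𝒰 (fun _ hU => scottOpen_iff_isOpen.mpr (h𝒰 hU)) hcov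

lemma IsCompact.isOpen_setOf_subset {X : Type*} [TopologicalSpace X] {K : Set X}
    (hK : IsCompact K) {V : P → Set X} (hV : ∀ x, IsOpen (V x))
    (hV' : ∀ p, IsOpen {x | p ∈ V x}) : IsOpen {x | K ⊆ V x} := by
  have hmono : Monotone V := fun x y hxy p hp =>
    IsScott.isUpperSet_of_isOpen (D := univ) (hV' p) hxy hp
  rw [IsScott.isOpen_iff_isUpperSet_and_dirSupInaccOn (D := univ), dirSupInaccOn_univ]
  refine ⟨fun x y hxy hx => hx.trans (hmono hxy), fun d hd hdir a ha haK => ?_⟩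
  have hcover : K ⊆ ⋃ c : d, V c := fun p hp => by
    obtain ⟨c, hcd, hpc⟩ := (scottOpen_iff_isOpen.mpr (hV' p)).2 d hd hdir a ha (haK hp)
    exact mem_iUnion.mpr ⟨⟨c, hcd⟩, hpc⟩
  have : Nonempty d := hd.to_subtype
  obtain ⟨c, hc⟩ := hK.elim_directed_cover (fun c : d => V c) (fun c => hV c) hcover
    (hdir.directed_val.mono_comp _ fun _ _ h => hmono h)
  exact ⟨c, c.2, hc⟩

end ScottTopology

section Rudin

variable {X : Type*} [TopologicalSpace X] {𝒞 : Set (Set X)}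

theorem exists_minimal_isClosed_inter_nonempty (h𝒞 : ∀ K ∈ 𝒞, IsCompact K) {A : Set X}
    (hA : IsClosed A) (hA𝒞 : ∀ K ∈ 𝒞, (A ∩ K).Nonempty) :
    ∃ C ⊆ A, Minimal (fun C => IsClosed C ∧ ∀ K ∈ 𝒞, (C ∩ K).Nonempty) C := by
  refine zorn_superset_nonempty _ (fun c hc hchain hne => ?_) A ⟨hA, hA𝒞⟩
  refine ⟨⋂₀ c, ⟨isClosed_sInter fun C hC => (hc hC).1, fun K hK => ?_⟩,
    fun C hC => sInter_subset_of_mem hC⟩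
  have : Nonempty c := hne.to_subtype
  have hdir : Directed (· ⊇ ·) fun C : c => (C : Set X) := fun C D =>
    (hchain.total C.2 D.2).elim (fun h => ⟨C, subset_rfl, h⟩) fun h => ⟨D, h, subset_rfl⟩
  by_contra hempty
  obtain ⟨C, hC⟩ := (h𝒞 K hK).elim_directed_family_closed (fun C : c => (C : Set X))
    (fun C => (hc C.2).1) (by rwa [← sInter_eq_iInter, inter_comm, ← not_nonempty_iff_eq_empty])
    hdir
  exact ((hc C.2).2 K hK).ne_empty (by rwa [inter_comm])

theorem Minimal.exists_inter_subset_of_isOpen {C : Set X}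
    (hC : Minimal (fun C => IsClosed C ∧ ∀ K ∈ 𝒞, (C ∩ K).Nonempty) C) {O : Set X}
    (hO : IsOpen O) (hCO : (C ∩ O).Nonempty) : ∃ K ∈ 𝒞, C ∩ K ⊆ O := by
  by_contra! h
  have hCsub : C ⊆ C \ O := hC.2 ⟨hC.1.1.sdiff hO, fun K hK => ?_⟩ sdiff_subset
  · obtain ⟨x, hxC, hxO⟩ := hCO
    exact (hCsub hxC).2 hxO
  · obtain ⟨x, ⟨hxC, hxK⟩, hxO⟩ := not_subset.mp (h K hK)
    exact ⟨x, ⟨hxC, hxO⟩, hxK⟩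

end Rudin

section SemilatticeSup

variable {P : Type*} [SemilatticeSup P] [TopologicalSpace P] [IsScott P univ]

lemma Topology.IsScott.continuous_sup_left (a : P) : Continuous (a ⊔ ·) :=
  (IsScott.scottContinuousOn_iff_continuous (D := univ) fun _ _ _ => trivial).mp <|
    (((ScottContinuous.const a).prodMk ScottContinuous.id).comp
      ScottContinuous.sup₂).scottContinuousOn

lemma Topology.IsScott.continuous_sup_right (a : P) : Continuous (· ⊔ a) := by
  simpa only [sup_comm] using IsScott.continuous_sup_left a

variable {𝒞 : Set (Set P)} {C : Set P}

lemma Minimal.exists_sup_mem_inter (h𝒞 : ∀ K ∈ 𝒞, IsCompact K) (hdir : DirectedOn (· ⊇ ·) 𝒞)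
    (hC : Minimal (fun C => IsClosed C ∧ ∀ K ∈ 𝒞, (C ∩ K).Nonempty) C) {x : P} (hx : x ∈ C)
    {K : Set P} (hK : K ∈ 𝒞) : ∃ p ∈ C ∩ K, x ⊔ p ∈ C := by
  by_contra! hxK
  have hG : IsOpen {z | C ∩ K ⊆ {p | z ⊔ p ∉ C}} :=
    ((h𝒞 K hK).inter_left hC.1.1).isOpen_setOf_subset
      (fun z => hC.1.1.isOpen_compl.preimage (IsScott.continuous_sup_left z))
      (fun p => hC.1.1.isOpen_compl.preimage (IsScott.continuous_sup_right p))
  obtain ⟨K₀, hK₀, hK₀G⟩ := hC.exists_inter_subset_of_isOpen hG ⟨x, hx, hxK⟩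
  obtain ⟨K₁, hK₁, hK₁₀, hK₁K⟩ := hdir K₀ hK₀ K hK
  obtain ⟨z, hzC, hzK₁⟩ := hC.1.2 K₁ hK₁
  exact hK₀G ⟨hzC, hK₁₀ hzK₁⟩ ⟨hzC, hK₁K hzK₁⟩ (by rwa [sup_idem])

lemma Minimal.sup_mem (h𝒞 : ∀ K ∈ 𝒞, IsCompact K) (hdir : DirectedOn (· ⊇ ·) 𝒞)
    (hC : Minimal (fun C => IsClosed C ∧ ∀ K ∈ 𝒞, (C ∩ K).Nonempty) C) {x y : P} (hx : x ∈ C)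
    (hy : y ∈ C) : x ⊔ y ∈ C := by
  have hCx : IsClosed (C ∩ (x ⊔ ·) ⁻¹' C) :=
    hC.1.1.inter (hC.1.1.preimage (IsScott.continuous_sup_left x))
  have hCx𝒞 : ∀ K ∈ 𝒞, (C ∩ (x ⊔ ·) ⁻¹' C ∩ K).Nonempty := fun K hK => by
    obtain ⟨p, ⟨hpC, hpK⟩, hxp⟩ := hC.exists_sup_mem_inter h𝒞 hdir hx hK
    exact ⟨p, ⟨hpC, hxp⟩, hpK⟩
  exact (hC.2 ⟨hCx, hCx𝒞⟩ inter_subset_left hy).2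

theorem Topology.IsScott.exists_mem_subset_of_sInter_subset (hd : IsDcpo P) (h𝒞 : 𝒞.Nonempty)
    (hK : ∀ K ∈ 𝒞, IsCompact K ∧ IsUpperSet K) (hdir : DirectedOn (· ⊇ ·) 𝒞) {U : Set P}
    (hU : IsOpen U) (h𝒞U : ⋂₀ 𝒞 ⊆ U) : ∃ K ∈ 𝒞, K ⊆ U := by
  by_contra! h
  obtain ⟨C, hCU, hC⟩ := exists_minimal_isClosed_inter_nonempty (fun K hK' => (hK K hK').1)
    hU.isClosed_compl fun K hK' => by
      obtain ⟨x, hxK, hxU⟩ := not_subset.mp (h K hK')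
      exact ⟨x, hxU, hxK⟩
  obtain ⟨K₀, hK₀⟩ := h𝒞
  have hCne : C.Nonempty := (hC.1.2 K₀ hK₀).mono inter_subset_left
  have hCdir : DirectedOn (· ≤ ·) C := fun x hx y hy =>
    ⟨x ⊔ y, hC.sup_mem (fun K hK' => (hK K hK').1) hdir hx hy, le_sup_left, le_sup_right⟩
  obtain ⟨s, hs⟩ := hd C hCne hCdir
  have hsC : s ∈ C := IsScott.dirSupClosed_of_isClosed hC.1.1 subset_rfl hCne hCdir hs
  have hs𝒞 : s ∈ ⋂₀ 𝒞 := fun K hK' => by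
    obtain ⟨c, hcC, hcK⟩ := hC.1.2 K hK'
    exact (hK K hK').2 (hs.1 hcC) hcK
  exact hCU hsC (h𝒞U hs𝒞)

end SemilatticeSup

theorem upComplete_semilattice_wellFiltered {P : Type u} [PartialOrder P]
    (hd : IsDcpo P) (hsup : ∀ x y : P, ∃ z, IsLUB {x, y} z) :
    WellFiltered P := by
  choose sup hsup using hsup
  let := SemilatticeSup.ofIsLUB sup hsup
  let := Topology.scott P univ
  have : IsScott P univ := ⟨rfl⟩
  intro 𝒞 h𝒞 hK hdir U hU h𝒞U
  exact IsScott.exists_mem_subset_of_sInter_subset hd h𝒞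
    (fun K hK' => ⟨(hK K hK').1.isCompact, (hK K hK').2⟩) hdir (scottOpen_iff_isOpen.mp hU) h𝒞U
end
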